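/- Let μ₁, μ₂ ∈ C[0,1] and 0 < σ₁ ≤ σ₂ with σ₁ > σ₂/2. Then the L₁ distance between the mixture densities satisfies ‖f_{μ₁,σ₁} − f_{μ₂,σ₂}‖₁ ≤ √(2/π) · ‖μ₁ − μ₂‖_∞/σ₁ + 3(σ₂ − σ₁)/σ₁. -/

import Mathlib

/-!
The mixing is over `x ∈ [0, 1]` with total mass one, so Minkowski's integral inequality reduces
the bound to one between the kernels `φ_{σ₁}(· - μ₁ x)` and `φ_{σ₂}(· - μ₂ x)` for each fixed
`x`; passing through `φ_{σ₁}(· - μ₂ x)` splits it into a change of mean and a change of bandwidth.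
Two translates of a symmetric unimodal density `f` are at `L¹` distance at most `2 |a - b| f 0`,
which for the Gaussian is `√(2/π) |a - b| / σ`. For the bandwidth, `(σ₁/σ₂) φ_{σ₁} ≤ φ_{σ₂}`
pointwise, and two probability densities with `c p ≤ q` are at `L¹` distance at most
`2 (1 - c) = 2 (σ₂ - σ₁) / σ₂`.
-/

open MeasureTheory Real Set

/-- Gaussian density with mean 0 and standard deviation σ. -/
noncomputable def gauss (σ t : ℝ) : ℝ :=
  (Real.sqrt (2 * Real.pi) * σ)⁻¹ * Real.exp (-(t ^ 2) / (2 * σ ^ 2))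

/-- NL-LVM mixture density with transfer function μ and bandwidth σ. -/
noncomputable def mixDens (μ : ℝ → ℝ) (σ : ℝ) (y : ℝ) : ℝ :=
  ∫ x in Set.Icc (0 : ℝ) 1, gauss σ (y - μ x)

open ProbabilityTheory

theorem integral_norm_integral_le {X Y E : Type*} [MeasurableSpace X] [MeasurableSpace Y]
    [NormedAddCommGroup E] [NormedSpace ℝ E] {μ : Measure X} {ν : Measure Y}
    [SFinite μ] [SFinite ν] {F : X × Y → E} (hF : Integrable F (μ.prod ν)) :
    ∫ y, ‖∫ x, F (x, y) ∂μ‖ ∂ν ≤ ∫ x, ∫ y, ‖F (x, y)‖ ∂ν ∂μ := by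
  rw [integral_integral_swap hF.norm]
  exact integral_mono hF.integral_prod_right.norm hF.norm.integral_prod_right
    fun y => norm_integral_le_integral_norm _

theorem integral_abs_sub_le_of_mul_le {X : Type*} [MeasurableSpace X] {ν : Measure X}
    {p q : X → ℝ} (hp : Integrable p ν) (hq : Integrable q ν) (hp0 : ∀ x, 0 ≤ p x)
    (hp1 : ∫ x, p x ∂ν = 1) (hq1 : ∫ x, q x ∂ν = 1) {c : ℝ} (hc : c ≤ 1)
    (hcpq : ∀ x, c * p x ≤ q x) :
    ∫ x, |p x - q x| ∂ν ≤ 2 * (1 - c) := by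
  have hbound : ∀ x, |p x - q x| ≤ q x + (1 - 2 * c) * p x := fun x =>
    abs_le.2 ⟨by nlinarith [hp0 x], by linarith [hcpq x]⟩
  calc ∫ x, |p x - q x| ∂ν ≤ ∫ x, q x + (1 - 2 * c) * p x ∂ν :=
        integral_mono (hp.sub hq).abs (hq.add (hp.const_mul _)) hbound
    _ = 2 * (1 - c) := by
        rw [integral_add hq (hp.const_mul _), integral_const_mul, hp1, hq1]; ring

theorem integral_abs_eq_two_mul_setIntegral_Iic {g : ℝ → ℝ} (hg : Integrable g)
    (hg0 : ∫ y, g y = 0) {c : ℝ} (hle : ∀ y ≤ c, 0 ≤ g y) (hgt : ∀ y, c < y → g y ≤ 0) :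
    ∫ y, |g y| = 2 * ∫ y in Iic c, g y := by
  have hsplit := intervalIntegral.integral_Iic_add_Ioi hg.integrableOn hg.integrableOn (b := c)
  have hIic : ∫ y in Iic c, |g y| = ∫ y in Iic c, g y :=
    setIntegral_congr_fun measurableSet_Iic fun y hy => abs_of_nonneg (hle y hy)
  have hIoi : ∫ y in Ioi c, |g y| = -∫ y in Ioi c, g y := by
    rw [← integral_neg]
    exact setIntegral_congr_fun measurableSet_Ioi fun y hy => abs_of_nonpos (hgt y hy)
  rw [← intervalIntegral.integral_Iic_add_Ioi hg.abs.integrableOn hg.abs.integrableOn (b := c),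
    hIic, hIoi]
  linarith

theorem setIntegral_Iic_comp_sub_right (f : ℝ → ℝ) (c d : ℝ) :
    ∫ y in Iic c, f (y - d) = ∫ y in Iic (c - d), f y := by
  rw [← integral_indicator measurableSet_Iic, ← integral_indicator measurableSet_Iic,
    ← integral_sub_right_eq_self ((Iic (c - d)).indicator f) d]
  congr 1 with y
  simp only [indicator_apply, mem_Iic, sub_le_sub_iff_right]

theorem integral_abs_comp_sub_sub_comp_sub_le {f : ℝ → ℝ} (hf : Integrable f)
    (hf_anti : ∀ s t, |s| ≤ |t| → f t ≤ f s) {a b : ℝ} (hab : a ≤ b) :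
    ∫ y, |f (y - a) - f (y - b)| ≤ 2 * (b - a) * f 0 := by
  have hfa := hf.comp_sub_right a
  have hfb := hf.comp_sub_right b
  have hleft : ∀ y ≤ (a + b) / 2, 0 ≤ f (y - a) - f (y - b) := fun y hy =>
    sub_nonneg.2 (hf_anti _ _ (sq_le_sq.1 (by nlinarith)))
  have hright : ∀ y, (a + b) / 2 < y → f (y - a) - f (y - b) ≤ 0 := fun y hy =>
    sub_nonpos.2 (hf_anti _ _ (sq_le_sq.1 (by nlinarith)))
  have hmean : ∫ y, f (y - a) - f (y - b) = 0 := by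
    rw [integral_sub hfa hfb, integral_sub_right_eq_self, integral_sub_right_eq_self, sub_self]
  have hexcess : ∫ y in Iic ((a + b) / 2), f (y - a) - f (y - b)
      = ∫ y in (a + b) / 2 - b..(a + b) / 2 - a, f y := by
    rw [integral_sub hfa.integrableOn hfb.integrableOn, setIntegral_Iic_comp_sub_right,
      setIntegral_Iic_comp_sub_right,
      intervalIntegral.integral_Iic_sub_Iic hf.integrableOn hf.integrableOn]
  -- The translates cross at the midpoint and have equal mass, so the `L¹` distance is twice the
  -- excess of `f (· - a)` on `Iic ((a + b) / 2)`.
  rw [integral_abs_eq_two_mul_setIntegral_Iic (g := fun y => f (y - a) - f (y - b))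
    (hfa.sub hfb) hmean hleft hright, hexcess, mul_assoc]
  gcongr
  calc ∫ y in (a + b) / 2 - b..(a + b) / 2 - a, f y
        ≤ ∫ _ in (a + b) / 2 - b..(a + b) / 2 - a, f 0 :=
        intervalIntegral.integral_mono_on (by linarith) hf.intervalIntegrable
          intervalIntegrable_const fun y _ => hf_anti 0 y (by simp)
    _ = (b - a) * f 0 := by rw [intervalIntegral.integral_const, smul_eq_mul]; ring

theorem le_ciSup_of_continuousOn {α : Type*} [TopologicalSpace α] {f : α → ℝ} {s : Set α}
    (hs : IsCompact s) (hf : ContinuousOn f s) {x : α} (hx : x ∈ s) : f x ≤ ⨆ y : s, f y :=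
  le_ciSup (by simpa only [image_eq_range] using hs.bddAbove_image hf) (⟨x, hx⟩ : s)

theorem gauss_comp_sub_eq_gaussianPDFReal {σ : ℝ} (hσ : 0 < σ) (a : ℝ) :
    (fun y => gauss σ (y - a)) = gaussianPDFReal a (σ ^ 2).toNNReal := by
  ext y
  rw [gaussianPDFReal, Real.coe_toNNReal _ (sq_nonneg σ), gauss, Real.sqrt_mul' _ (sq_nonneg σ),
    Real.sqrt_sq hσ.le]

theorem gauss_nonneg {σ : ℝ} (hσ : 0 < σ) (t : ℝ) : 0 ≤ gauss σ t := by
  unfold gauss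
  positivity

theorem integrable_gauss_comp_sub {σ : ℝ} (hσ : 0 < σ) (a : ℝ) :
    Integrable fun y => gauss σ (y - a) := by
  rw [gauss_comp_sub_eq_gaussianPDFReal hσ]
  exact integrable_gaussianPDFReal _ _

theorem integral_gauss_comp_sub {σ : ℝ} (hσ : 0 < σ) (a : ℝ) :
    ∫ y, gauss σ (y - a) = 1 := by
  rw [gauss_comp_sub_eq_gaussianPDFReal hσ]
  exact integral_gaussianPDFReal_eq_one _ (by positivity)

theorem continuous_gauss (σ : ℝ) : Continuous (gauss σ) := by
  unfold gauss
  fun_prop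

theorem gauss_le_gauss {σ : ℝ} (hσ : 0 < σ) {s t : ℝ} (hst : |s| ≤ |t|) :
    gauss σ t ≤ gauss σ s := by
  unfold gauss
  have := sq_le_sq.2 hst
  gcongr

theorem two_mul_gauss_zero (σ : ℝ) : 2 * gauss σ 0 = √(2 / π) / σ := by
  have h2 : √2 ^ 2 = 2 := Real.sq_sqrt zero_le_two
  have hπ : 0 < √π := Real.sqrt_pos.2 pi_pos
  simp only [gauss, ne_eq, OfNat.ofNat_ne_zero, not_false_eq_true, zero_pow, neg_zero, zero_div,
    exp_zero, mul_one, Real.sqrt_mul zero_le_two, Real.sqrt_div zero_le_two]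
  field_simp
  rw [h2]

theorem mul_gauss_le_gauss {σ₁ σ₂ : ℝ} (hσ₁ : 0 < σ₁) (h12 : σ₁ ≤ σ₂) (t : ℝ) :
    σ₁ / σ₂ * gauss σ₁ t ≤ gauss σ₂ t := by
  have hσ₂ := hσ₁.trans_le h12
  have hcoef : σ₁ / σ₂ * (√(2 * π) * σ₁)⁻¹ = (√(2 * π) * σ₂)⁻¹ := by
    have : √(2 * π) ≠ 0 := by positivity
    field_simp
  rw [gauss, gauss, ← mul_assoc, hcoef]
  refine mul_le_mul_of_nonneg_left (exp_le_exp.2 ?_) (by positivity)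
  rw [neg_div, neg_div, neg_le_neg_iff]
  gcongr

theorem integral_abs_gauss_sub_le_of_mean {σ : ℝ} (hσ : 0 < σ) (a b : ℝ) :
    ∫ y, |gauss σ (y - a) - gauss σ (y - b)| ≤ √(2 / π) * |a - b| / σ := by
  wlog hab : a ≤ b generalizing a b
  · simpa only [abs_sub_comm] using this b a (le_of_not_ge hab)
  calc _ ≤ 2 * (b - a) * gauss σ 0 :=
        integral_abs_comp_sub_sub_comp_sub_le (by simpa using integrable_gauss_comp_sub hσ 0)
          (fun _ _ => gauss_le_gauss hσ) hab
    _ = √(2 / π) * |a - b| / σ := by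
        rw [abs_sub_comm, abs_of_nonneg (sub_nonneg.2 hab), mul_right_comm, two_mul_gauss_zero]
        ring

theorem integral_abs_gauss_sub_le_of_bandwidth {σ₁ σ₂ : ℝ} (hσ₁ : 0 < σ₁) (h12 : σ₁ ≤ σ₂)
    (a : ℝ) :
    ∫ y, |gauss σ₁ (y - a) - gauss σ₂ (y - a)| ≤ 2 * (σ₂ - σ₁) / σ₁ := by
  have hσ₂ := hσ₁.trans_le h12
  calc _ ≤ 2 * (1 - σ₁ / σ₂) :=
        integral_abs_sub_le_of_mul_le (integrable_gauss_comp_sub hσ₁ a)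
          (integrable_gauss_comp_sub hσ₂ a) (fun _ => gauss_nonneg hσ₁ _)
          (integral_gauss_comp_sub hσ₁ a) (integral_gauss_comp_sub hσ₂ a)
          ((div_le_one hσ₂).2 h12) fun _ => mul_gauss_le_gauss hσ₁ h12 _
    _ = 2 * (σ₂ - σ₁) / σ₂ := by field_simp
    _ ≤ 2 * (σ₂ - σ₁) / σ₁ := by gcongr

theorem integral_abs_gauss_sub_le {σ₁ σ₂ : ℝ} (hσ₁ : 0 < σ₁) (h12 : σ₁ ≤ σ₂) (a b : ℝ) :
    ∫ y, |gauss σ₁ (y - a) - gauss σ₂ (y - b)|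
      ≤ √(2 / π) * |a - b| / σ₁ + 2 * (σ₂ - σ₁) / σ₁ := by
  have hσ₂ := hσ₁.trans_le h12
  have ha := integrable_gauss_comp_sub hσ₁ a
  have hb₁ := integrable_gauss_comp_sub hσ₁ b
  have hb₂ := integrable_gauss_comp_sub hσ₂ b
  calc _ ≤ ∫ y, |gauss σ₁ (y - a) - gauss σ₁ (y - b)| + |gauss σ₁ (y - b) - gauss σ₂ (y - b)| :=
        integral_mono (ha.sub hb₂).abs ((ha.sub hb₁).abs.add (hb₁.sub hb₂).abs)
          fun y => abs_sub_le _ _ _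
    _ = _ := integral_add (ha.sub hb₁).abs (hb₁.sub hb₂).abs
    _ ≤ _ := add_le_add (integral_abs_gauss_sub_le_of_mean hσ₁ a b)
        (integral_abs_gauss_sub_le_of_bandwidth hσ₁ h12 b)

theorem integrable_prod_gauss_sub_comp {X : Type*} [MeasurableSpace X] {ν : Measure X}
    [IsFiniteMeasure ν] {μ : X → ℝ} (hμ : AEStronglyMeasurable μ ν) {σ : ℝ} (hσ : 0 < σ) :
    Integrable (fun p : X × ℝ => gauss σ (p.2 - μ p.1)) (ν.prod volume) := by
  have hmeas : AEStronglyMeasurable (fun p : X × ℝ => gauss σ (p.2 - μ p.1)) (ν.prod volume) :=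
    (continuous_gauss σ).comp_aestronglyMeasurable
      (measurable_snd.aestronglyMeasurable.sub hμ.comp_fst)
  refine (integrable_prod_iff hmeas).2
    ⟨ae_of_all _ fun x => integrable_gauss_comp_sub hσ (μ x), ?_⟩
  simp only [Real.norm_eq_abs, abs_of_nonneg (gauss_nonneg hσ _), integral_gauss_comp_sub hσ]
  exact integrable_const 1

theorem integrableOn_gauss_sub_comp {μ : ℝ → ℝ} {s : Set ℝ} (hs : IsCompact s)
    (hμ : ContinuousOn μ s) (σ y : ℝ) : IntegrableOn (fun x => gauss σ (y - μ x)) s :=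
  ((continuous_gauss σ).comp_continuousOn (continuousOn_const.sub hμ)).integrableOn_compact hs

theorem integral_abs_mixDens_sub_le {μ μ' : ℝ → ℝ} (hμ : ContinuousOn μ (Icc 0 1))
    (hμ' : ContinuousOn μ' (Icc 0 1)) {σ σ' : ℝ} (hσ : 0 < σ) (hσ' : 0 < σ') {C : ℝ}
    (hC : ∀ x ∈ Icc (0 : ℝ) 1, ∫ y, |gauss σ (y - μ x) - gauss σ' (y - μ' x)| ≤ C) :
    ∫ y, |mixDens μ σ y - mixDens μ' σ' y| ≤ C := by
  have hF := (integrable_prod_gauss_sub_comp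
      (hμ.aestronglyMeasurable (μ := volume) measurableSet_Icc) hσ).sub
    (integrable_prod_gauss_sub_comp (hμ'.aestronglyMeasurable (μ := volume) measurableSet_Icc) hσ')
  have hdiff : ∀ y, mixDens μ σ y - mixDens μ' σ' y
      = ∫ x in Icc 0 1, gauss σ (y - μ x) - gauss σ' (y - μ' x) := fun y =>
    (integral_sub (integrableOn_gauss_sub_comp isCompact_Icc hμ σ y)
      (integrableOn_gauss_sub_comp isCompact_Icc hμ' σ' y)).symm
  calc ∫ y, |mixDens μ σ y - mixDens μ' σ' y|
      ≤ ∫ x in Icc 0 1, ∫ y, |gauss σ (y - μ x) - gauss σ' (y - μ' x)| := by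
        simp only [hdiff]
        exact integral_norm_integral_le hF
    _ ≤ ∫ _ in Icc (0 : ℝ) 1, C :=
        setIntegral_mono_on hF.integral_norm_prod_left (integrableOn_const (by simp))
          measurableSet_Icc hC
    _ = C := by simp

theorem stmt_7_general (μ₁ μ₂ : ℝ → ℝ) (hμ₁ : ContinuousOn μ₁ (Set.Icc 0 1))
    (hμ₂ : ContinuousOn μ₂ (Set.Icc 0 1)) (σ₁ σ₂ : ℝ)
    (hσ₁ : 0 < σ₁) (h12 : σ₁ ≤ σ₂) :
    ∫ y, |mixDens μ₁ σ₁ y - mixDens μ₂ σ₂ y|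
      ≤ Real.sqrt (2 / Real.pi) * (⨆ x : Set.Icc (0 : ℝ) 1, |μ₁ x - μ₂ x|) / σ₁
        + 3 * (σ₂ - σ₁) / σ₁ := by
  refine integral_abs_mixDens_sub_le hμ₁ hμ₂ hσ₁ (hσ₁.trans_le h12) fun x hx => ?_
  calc _ ≤ √(2 / π) * |μ₁ x - μ₂ x| / σ₁ + 2 * (σ₂ - σ₁) / σ₁ :=
        integral_abs_gauss_sub_le hσ₁ h12 _ _
    _ ≤ _ := by
        gcongr
        · exact le_ciSup_of_continuousOn isCompact_Icc (hμ₁.sub hμ₂).abs hx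
        · linarith

/-- L₁ distance bound between two NL-LVM mixture densities with
nearby bandwidths. -/
theorem stmt_7 (μ₁ μ₂ : ℝ → ℝ) (hμ₁ : ContinuousOn μ₁ (Set.Icc 0 1))
    (hμ₂ : ContinuousOn μ₂ (Set.Icc 0 1)) (σ₁ σ₂ : ℝ)
    (hσ₁ : 0 < σ₁) (h12 : σ₁ ≤ σ₂) (hhalf : σ₂ / 2 < σ₁) :
    ∫ y, |mixDens μ₁ σ₁ y - mixDens μ₂ σ₂ y|
      ≤ Real.sqrt (2 / Real.pi) * (⨆ x : Set.Icc (0 : ℝ) 1, |μ₁ x - μ₂ x|) / σ₁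
        + 3 * (σ₂ - σ₁) / σ₁ :=
  stmt_7_general μ₁ μ₂ hμ₁ hμ₂ σ₁ σ₂ hσ₁ h12
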